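/- Extraction in the group: Let G be a commutative group, α ∈ G with orderOf α = q where q is prime, and let y, s₁, s₂, h₁, h₂ ∈ ZMod q. If α^((y*h₁+s₁).val) = α^((y*h₂+s₂).val) and h₁ ≠ h₂, then y = (s₂ - s₁) * (h₁ - h₂)⁻¹ in ZMod q. -/

import Mathlib

theorem ZMod.pow_val_eq_pow_val_iff {M : Type*} [Monoid M] {α : M} {n : ℕ} [NeZero n]
    (hα : orderOf α = n) {a b : ZMod n} : α ^ a.val = α ^ b.val ↔ a = b := by
  have hfin : IsOfFinOrder α := orderOf_pos_iff.mp (hα ▸ NeZero.pos n)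
  rw [hfin.pow_eq_pow_iff_modEq, hα, ← ZMod.natCast_eq_natCast_iff, ZMod.natCast_zmod_val,
    ZMod.natCast_zmod_val]

theorem eq_sub_mul_inv_sub_of_mul_add_eq_mul_add {K : Type*} [DivisionRing K]
    {y s₁ s₂ h₁ h₂ : K} (h : y * h₁ + s₁ = y * h₂ + s₂) (hne : h₁ ≠ h₂) :
    y = (s₂ - s₁) * (h₁ - h₂)⁻¹ := by
  have hy : y * (h₁ - h₂) = s₂ - s₁ := by
    rw [mul_sub, sub_eq_sub_iff_add_eq_add, h, add_comm]
  rw [← hy, mul_inv_cancel_right₀ (sub_ne_zero.mpr hne)]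

theorem key_extraction_in_group {G : Type*} [CommGroup G] (α : G) (q : ℕ) (hq : q.Prime)
    (hord : orderOf α = q) (y s₁ s₂ h₁ h₂ : ZMod q)
    (heq : α ^ (y * h₁ + s₁).val = α ^ (y * h₂ + s₂).val) (hne : h₁ ≠ h₂) :
    y = (s₂ - s₁) * (h₁ - h₂)⁻¹ := by
  have : Fact q.Prime := ⟨hq⟩
  have hexp : y * h₁ + s₁ = y * h₂ + s₂ := (ZMod.pow_val_eq_pow_val_iff hord).mp heq
  exact eq_sub_mul_inv_sub_of_mul_add_eq_mul_add hexp hne
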